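/- F is differentiable at every tensor M ∈ ℝ^{S^{T+1}}, and its gradient is ∇F(M) = C(M) + E(M), where E(M)(x_0,…,x_T) = Σ_{i=0}^{T−1} E_i(x_i) with E_i(y) = Σ_{(z,w)∈S×S} ∇W(z − y)ᵀ (w − z + (1/T)[∇W * P_i(M)](z) − (1/T) b(z)) · P_{i,i+1}(M)(z,w). -/

import Mathlib

/-! `F` is a polynomial in `M`: the marginals, hence the convolutions `∇W * P_i(M)`, are linear
in `M`, so the only nonlinearity of `C(M)` is in the squared norms. Differentiating
`⟨C(N), N⟩` in the direction `H` gives `⟨C(M), H⟩` plus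
`Σ_x M(x) Σ_i ⟨v_i(x), [∇W * P_i(H)](x_i)⟩`, where `v_i(x)` is the vector inside the `i`-th
norm. Writing `[∇W * P_i(H)](x_i) = Σ_y H(y) ∇W(x_i - y_i)` and exchanging the sums over the
paths `x` and `y` turns the second term into `⟨E(M), H⟩`, because
`E_i(y) = Σ_x M(x) ⟨∇W(x_i - y), v_i(x)⟩` by the definition of the pairwise marginal. -/

open scoped BigOperators Classical

noncomputable section

namespace Stmt1

variable {d T : ℕ} {S : Finset (EuclideanSpace ℝ (Fin d))}

/-- The `i`-th marginal `P_i(M)(y) = Σ_{x : x_i = y} M(x)` of a tensor on `S^{T+1}`. -/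
def marg (M : (Fin (T + 1) → {x // x ∈ S}) → ℝ) (i : Fin (T + 1)) (y : {x // x ∈ S}) : ℝ :=
  ∑ x : Fin (T + 1) → {x // x ∈ S}, if x i = y then M x else 0

/-- The pairwise marginal `P_{i,i+1}(M)(y,z) = Σ_{x : x_i = y, x_{i+1} = z} M(x)`. -/
def margPair (M : (Fin (T + 1) → {x // x ∈ S}) → ℝ) (i : Fin T) (y z : {x // x ∈ S}) : ℝ :=
  ∑ x : Fin (T + 1) → {x // x ∈ S}, if x i.castSucc = y ∧ x i.succ = z then M x else 0

/-- The discrete convolution `[∇W * P_i(M)](y) = Σ_{z ∈ S} ∇W(y - z) P_i(M)(z)`. -/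
def convW (W : EuclideanSpace ℝ (Fin d) → ℝ) (M : (Fin (T + 1) → {x // x ∈ S}) → ℝ)
    (i : Fin (T + 1)) (y : EuclideanSpace ℝ (Fin d)) : EuclideanSpace ℝ (Fin d) :=
  ∑ z : {x // x ∈ S}, marg M i z • gradient W (y - (z : EuclideanSpace ℝ (Fin d)))

/-- The cost tensor `C(M)(x_0,…,x_T) = (1/T) Σ_{i=0}^{T-1} V(x_i)
  + Σ_{i=0}^{T-1} (T/2) ‖x_{i+1} - x_i + (1/T)[∇W * P_i(M)](x_i) - (1/T) b(x_i)‖²`. -/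
def costC (W : EuclideanSpace ℝ (Fin d) → ℝ)
    (b : EuclideanSpace ℝ (Fin d) → EuclideanSpace ℝ (Fin d))
    (V : EuclideanSpace ℝ (Fin d) → ℝ)
    (M : (Fin (T + 1) → {x // x ∈ S}) → ℝ)
    (x : Fin (T + 1) → {x // x ∈ S}) : ℝ :=
  (1 / (T : ℝ)) * ∑ i : Fin T, V (x i.castSucc : EuclideanSpace ℝ (Fin d))
  + ∑ i : Fin T, ((T : ℝ) / 2) *
    ‖(x i.succ : EuclideanSpace ℝ (Fin d)) - (x i.castSucc : EuclideanSpace ℝ (Fin d))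
      + (1 / (T : ℝ)) • convW W M i.castSucc (x i.castSucc : EuclideanSpace ℝ (Fin d))
      - (1 / (T : ℝ)) • b (x i.castSucc : EuclideanSpace ℝ (Fin d))‖ ^ 2

/-- `F(M) = ⟨C(M), M⟩ = Σ_x C(M)(x) M(x)`. -/
def Ffun (W : EuclideanSpace ℝ (Fin d) → ℝ)
    (b : EuclideanSpace ℝ (Fin d) → EuclideanSpace ℝ (Fin d))
    (V : EuclideanSpace ℝ (Fin d) → ℝ)
    (M : (Fin (T + 1) → {x // x ∈ S}) → ℝ) : ℝ :=
  ∑ x : Fin (T + 1) → {x // x ∈ S}, costC W b V M x * M x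

/-- `E_i(y) = Σ_{(z,w) ∈ S×S} ∇W(z-y)ᵀ (w - z + (1/T)[∇W * P_i(M)](z) - (1/T) b(z))
  · P_{i,i+1}(M)(z,w)`. -/
def Ei (W : EuclideanSpace ℝ (Fin d) → ℝ)
    (b : EuclideanSpace ℝ (Fin d) → EuclideanSpace ℝ (Fin d))
    (M : (Fin (T + 1) → {x // x ∈ S}) → ℝ)
    (i : Fin T) (y : EuclideanSpace ℝ (Fin d)) : ℝ :=
  ∑ z : {x // x ∈ S}, ∑ w : {x // x ∈ S},
    (inner ℝ (gradient W ((z : EuclideanSpace ℝ (Fin d)) - y))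
      ((w : EuclideanSpace ℝ (Fin d)) - (z : EuclideanSpace ℝ (Fin d))
        + (1 / (T : ℝ)) • convW W M i.castSucc (z : EuclideanSpace ℝ (Fin d))
        - (1 / (T : ℝ)) • b (z : EuclideanSpace ℝ (Fin d))) : ℝ)
    * margPair M i z w

/-- `E(M)(x_0,…,x_T) = Σ_{i=0}^{T-1} E_i(x_i)`. -/
def Etens (W : EuclideanSpace ℝ (Fin d) → ℝ)
    (b : EuclideanSpace ℝ (Fin d) → EuclideanSpace ℝ (Fin d))
    (M : (Fin (T + 1) → {x // x ∈ S}) → ℝ)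
    (x : Fin (T + 1) → {x // x ∈ S}) : ℝ :=
  ∑ i : Fin T, Ei W b M i (x i.castSucc : EuclideanSpace ℝ (Fin d))

theorem hasGradientAt_of_hasFDerivAt_sum_smul_proj {ι : Type*} [Fintype ι]
    {f : EuclideanSpace ℝ ι → ℝ} {g : ι → ℝ} {M : EuclideanSpace ℝ ι}
    (h : HasFDerivAt f (∑ i, g i • EuclideanSpace.proj (𝕜 := ℝ) i) M) :
    HasGradientAt f (WithLp.toLp 2 g) M := by
  refine hasGradientAt_iff_hasFDerivAt.mpr (h.congr_fderiv (ContinuousLinearMap.ext fun H => ?_))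
  simp [PiLp.inner_apply, mul_comm]

theorem sum_marg_smul {E : Type*} [AddCommMonoid E] [Module ℝ E]
    (N : (Fin (T + 1) → {x // x ∈ S}) → ℝ) (i : Fin (T + 1)) (f : {x // x ∈ S} → E) :
    ∑ z, marg N i z • f z = ∑ x, N x • f (x i) := by
  simp only [marg, Finset.sum_smul, ite_smul, zero_smul]
  rw [Finset.sum_comm]
  simp

theorem sum_margPair_smul {E : Type*} [AddCommMonoid E] [Module ℝ E]
    (N : (Fin (T + 1) → {x // x ∈ S}) → ℝ) (i : Fin T) (f : {x // x ∈ S} → {x // x ∈ S} → E) :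
    ∑ z, ∑ w, margPair N i z w • f z w = ∑ x, N x • f (x i.castSucc) (x i.succ) := by
  simp only [margPair, Finset.sum_smul, ite_smul, zero_smul]
  rw [← Fintype.sum_prod_type', Finset.sum_comm]
  refine Finset.sum_congr rfl fun x _ => ?_
  rw [Fintype.sum_eq_single (x i.castSucc, x i.succ)] <;> aesop

section Cost

variable (W : EuclideanSpace ℝ (Fin d) → ℝ)
  (b : EuclideanSpace ℝ (Fin d) → EuclideanSpace ℝ (Fin d)) (V : EuclideanSpace ℝ (Fin d) → ℝ)

theorem convW_eq_sum (N : (Fin (T + 1) → {x // x ∈ S}) → ℝ) (i : Fin (T + 1))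
    (y : EuclideanSpace ℝ (Fin d)) :
    convW W N i y = ∑ x, N x • gradient W (y - (x i : EuclideanSpace ℝ (Fin d))) :=
  sum_marg_smul N i _

def convWCLM (i : Fin (T + 1)) (y : EuclideanSpace ℝ (Fin d)) :
    EuclideanSpace ℝ (Fin (T + 1) → {x // x ∈ S}) →L[ℝ] EuclideanSpace ℝ (Fin d) :=
  ∑ x : Fin (T + 1) → {x // x ∈ S},
    (EuclideanSpace.proj x).smulRight (gradient W (y - (x i : EuclideanSpace ℝ (Fin d))))

theorem convWCLM_apply (i : Fin (T + 1)) (y : EuclideanSpace ℝ (Fin d))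
    (N : EuclideanSpace ℝ (Fin (T + 1) → {x // x ∈ S})) :
    convWCLM W i y N = convW W N i y := by
  simp [convWCLM, convW_eq_sum]

def residual (M : (Fin (T + 1) → {x // x ∈ S}) → ℝ) (i : Fin T)
    (x : Fin (T + 1) → {x // x ∈ S}) : EuclideanSpace ℝ (Fin d) :=
  (x i.succ : EuclideanSpace ℝ (Fin d)) - (x i.castSucc : EuclideanSpace ℝ (Fin d))
    + (1 / (T : ℝ)) • convW W M i.castSucc (x i.castSucc : EuclideanSpace ℝ (Fin d))
    - (1 / (T : ℝ)) • b (x i.castSucc : EuclideanSpace ℝ (Fin d))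

theorem Ei_eq_sum (M : (Fin (T + 1) → {x // x ∈ S}) → ℝ) (i : Fin T)
    (y : EuclideanSpace ℝ (Fin d)) :
    Ei W b M i y = ∑ x, M x * inner ℝ
      (gradient W ((x i.castSucc : EuclideanSpace ℝ (Fin d)) - y)) (residual W b M i x) := by
  simp only [Ei, mul_comm _ (margPair M i _ _)]
  exact sum_margPair_smul M i _

theorem sum_mul_sum_inner_residual_convW (M H : (Fin (T + 1) → {x // x ∈ S}) → ℝ) :
    ∑ x, M x * ∑ i : Fin T, inner ℝ (residual W b M i x)
        (convW W H i.castSucc (x i.castSucc : EuclideanSpace ℝ (Fin d)))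
      = ∑ y, Etens W b M y * H y := by
  simp only [convW_eq_sum, inner_sum, real_inner_smul_right, Etens, Ei_eq_sum, Finset.mul_sum,
    Finset.sum_mul]
  rw [Finset.sum_comm, Finset.sum_congr rfl fun i _ => Finset.sum_comm, Finset.sum_comm]
  refine Finset.sum_congr rfl fun y _ => Finset.sum_congr rfl fun i _ =>
    Finset.sum_congr rfl fun x _ => ?_
  rw [real_inner_comm]
  ring

theorem hasFDerivAt_residual (i : Fin T) (x : Fin (T + 1) → {x // x ∈ S})
    (M : EuclideanSpace ℝ (Fin (T + 1) → {x // x ∈ S})) :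
    HasFDerivAt (fun N : EuclideanSpace ℝ (Fin (T + 1) → {x // x ∈ S}) => residual W b N i x)
      ((1 / (T : ℝ)) • convWCLM W i.castSucc (x i.castSucc : EuclideanSpace ℝ (Fin d))) M := by
  have h := ((((convWCLM W i.castSucc (x i.castSucc : EuclideanSpace ℝ (Fin d))).hasFDerivAt
    (x := M)).const_smul (1 / (T : ℝ))).const_add
      ((x i.succ : EuclideanSpace ℝ (Fin d)) - (x i.castSucc : EuclideanSpace ℝ (Fin d)))).sub_const
      ((1 / (T : ℝ)) • b (x i.castSucc : EuclideanSpace ℝ (Fin d)))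
  refine h.congr_of_eventuallyEq (Filter.Eventually.of_forall fun N => ?_)
  simp only [residual, Pi.smul_apply, convWCLM_apply]

theorem hasFDerivAt_costC (x : Fin (T + 1) → {x // x ∈ S})
    (M : EuclideanSpace ℝ (Fin (T + 1) → {x // x ∈ S})) :
    HasFDerivAt (fun N : EuclideanSpace ℝ (Fin (T + 1) → {x // x ∈ S}) => costC W b V N x)
      (∑ i, (innerSL ℝ (residual W b M i x)).comp
        (convWCLM W i.castSucc (x i.castSucc : EuclideanSpace ℝ (Fin d)))) M := by
  have hterm : ∀ i ∈ Finset.univ, HasFDerivAt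
      (fun N : EuclideanSpace ℝ (Fin (T + 1) → {x // x ∈ S}) =>
        ((T : ℝ) / 2) * ‖residual W b N i x‖ ^ 2)
      ((innerSL ℝ (residual W b M i x)).comp
        (convWCLM W i.castSucc (x i.castSucc : EuclideanSpace ℝ (Fin d)))) M := by
    intro i _
    have hT : (T : ℝ) ≠ 0 := Nat.cast_ne_zero.mpr i.pos.ne'
    refine (((hasFDerivAt_residual W b i x M).norm_sq).const_mul ((T : ℝ) / 2)).congr_fderiv
      (ContinuousLinearMap.ext fun H => ?_)
    simp only [smul_apply, ContinuousLinearMap.comp_apply, innerSL_apply_apply,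
      real_inner_smul_right, smul_eq_mul, nsmul_eq_mul, Nat.cast_ofNat]
    field_simp
  exact (HasFDerivAt.fun_sum hterm).const_add _

theorem hasFDerivAt_Ffun (M : EuclideanSpace ℝ (Fin (T + 1) → {x // x ∈ S})) :
    HasFDerivAt (fun N : EuclideanSpace ℝ (Fin (T + 1) → {x // x ∈ S}) => Ffun W b V N)
      (∑ x, (costC W b V M x + Etens W b M x) • EuclideanSpace.proj (𝕜 := ℝ) x) M := by
  have h := HasFDerivAt.fun_sum fun x (_ : x ∈ Finset.univ) =>
    (hasFDerivAt_costC W b V x M).mul ((EuclideanSpace.proj (𝕜 := ℝ) x).hasFDerivAt (x := M))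
  refine h.congr_fderiv (ContinuousLinearMap.ext fun H => ?_)
  simp only [sum_apply, add_apply, smul_apply, ContinuousLinearMap.comp_apply, innerSL_apply_apply,
    convWCLM_apply, PiLp.proj_apply, smul_eq_mul, add_mul, Finset.sum_add_distrib,
    sum_mul_sum_inner_residual_convW]

end Cost

theorem statement_1_general
    (W : EuclideanSpace ℝ (Fin d) → ℝ)
    (b : EuclideanSpace ℝ (Fin d) → EuclideanSpace ℝ (Fin d))
    (V : EuclideanSpace ℝ (Fin d) → ℝ)
    (M : EuclideanSpace ℝ (Fin (T + 1) → {x // x ∈ S})) :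
    DifferentiableAt ℝ
      (fun N : EuclideanSpace ℝ (Fin (T + 1) → {x // x ∈ S}) => Ffun W b V N) M ∧
    ∀ x : Fin (T + 1) → {x // x ∈ S},
      gradient (fun N : EuclideanSpace ℝ (Fin (T + 1) → {x // x ∈ S}) => Ffun W b V N) M x
        = costC W b V M x + Etens W b M x := by
  have h := hasGradientAt_of_hasFDerivAt_sum_smul_proj (hasFDerivAt_Ffun W b V M)
  exact ⟨h.differentiableAt, fun x => by rw [h.gradient]⟩

/-- `F` is differentiable at every tensor `M`, with gradient
`∇F(M) = C(M) + E(M)`. -/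
theorem statement_1 (hT : 1 ≤ T) (hS : S.Nonempty)
    (W : EuclideanSpace ℝ (Fin d) → ℝ) (hW : ContDiff ℝ 1 W)
    (b : EuclideanSpace ℝ (Fin d) → EuclideanSpace ℝ (Fin d)) (hb : Continuous b)
    (V : EuclideanSpace ℝ (Fin d) → ℝ)
    (M : EuclideanSpace ℝ (Fin (T + 1) → {x // x ∈ S})) :
    DifferentiableAt ℝ
      (fun N : EuclideanSpace ℝ (Fin (T + 1) → {x // x ∈ S}) => Ffun W b V N) M ∧
    ∀ x : Fin (T + 1) → {x // x ∈ S},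
      gradient (fun N : EuclideanSpace ℝ (Fin (T + 1) → {x // x ∈ S}) => Ffun W b V N) M x
        = costC W b V M x + Etens W b M x :=
  statement_1_general W b V M

end Stmt1
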